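/- Let U ⊆ ℝⁿ be open and suppose the bounded function u ∈ C(U) satisfies the convexity criterion in U. Then: (i) for every open V ⋐ U, with δ = δ(V) > 0 as in the convexity criterion, the map t ↦ (T^t u(x) − u(x))/t is nondecreasing on (0, δ] for each x ∈ V; (ii) S⁺u(x) = inf_{0 < t < δ(V)} (T^t u(x) − u(x))/t for every x ∈ V; (iii) the map x ↦ S⁺u(x) is upper semicontinuous on U; (iv) u ∈ Lip_loc(U). -/

import Mathlib

/-! The map `t ↦ T^t u(x)` equals `u(x)` at `t = 0`, so its convexity makes the difference
quotients `(T^t u(x) - u(x)) / t` nondecreasing, and `S⁺u(x)` is their infimum.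

Because `H⁻¹(0)` is bounded, the convex function `H` grows at least linearly, `c‖p‖ - C ≤ H p`,
so `L ≤ C` on the ball of radius `c`. Testing `T^t u(x)` with `y` at `t = ‖y - x‖ / c` gives
`u(y) - t C ≤ T^t u(x) ≤ u(x) + t (sup u - inf u) / δ`, i.e. a local Lipschitz bound.

On the other hand `L` is superlinear since `H` is finite, so for small `t` only competitors `y`
near `x` matter in `T^t u(x)`; translating them and using uniform continuity of `u` makes
`x ↦ T^t u(x)` upper semicontinuous, hence so is `S⁺u`, a local infimum of such functions. -/

open Set Metric MeasureTheory Filter Bornology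
open scoped RealInnerProductSpace

noncomputable section

abbrev Euc (n : ℕ) := EuclideanSpace ℝ (Fin n)

variable {n : ℕ}

/-- The Lagrangian of `H`, an extended real number. -/
def Lag (H : Euc n → ℝ) (q : Euc n) : EReal :=
  ⨆ p : Euc n, ((⟪p, q⟫ - H p : ℝ) : EReal)

/-- `T^t u (x)`, with supremum taken over `y ∈ S`. Points `y` where the Lagrangian term
is `+∞` contribute nothing, since no real number equals `-∞`. -/
def TupOn (H : Euc n → ℝ) (S : Set (Euc n)) (u : Euc n → ℝ) (t : ℝ) (x : Euc n) : ℝ :=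
  if t = 0 then u x
  else sSup {r : ℝ | ∃ y ∈ S, (r : EReal) = (u y : EReal) - (t : EReal) * Lag H (t⁻¹ • (y - x))}

/-- `T_t u (x)`, with infimum taken over `y ∈ S`. -/
def TdnOn (H : Euc n → ℝ) (S : Set (Euc n)) (u : Euc n → ℝ) (t : ℝ) (x : Euc n) : ℝ :=
  if t = 0 then u x
  else sInf {r : ℝ | ∃ y ∈ S, (r : EReal) = (u y : EReal) + (t : EReal) * Lag H (t⁻¹ • (x - y))}

/-- `S⁺ u (x) = limsup_{t ↓ 0} (T^t u(x) - u(x))/t`. -/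
def Splus (H : Euc n → ℝ) (U : Set (Euc n)) (u : Euc n → ℝ) (x : Euc n) : ℝ :=
  limsup (fun t => (TupOn H U u t x - u x) / t) (nhdsWithin 0 (Ioi 0))

/-- The oscillation `osc_U u = sup_U u - inf_U u`. -/
def oscOn (u : Euc n → ℝ) (U : Set (Euc n)) : ℝ := sSup (u '' U) - sInf (u '' U)

/-- `U_r = {x ∈ U : dist(x, ∂U) > r}`. -/
def inUr (U : Set (Euc n)) (r : ℝ) : Set (Euc n) := {x ∈ U | r < infDist x (frontier U)}

/-- The cone function `C_k(x) = max {p·x : H(p) = k}`. -/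
def coneFn (H : Euc n → ℝ) (k : ℝ) (x : Euc n) : ℝ :=
  sSup {r : ℝ | ∃ p, H p = k ∧ r = ⟪p, x⟫}

/-- The subdifferential of `H` at `p`. -/
def subdiff (H : Euc n → ℝ) (p : Euc n) : Set (Euc n) :=
  {q | ∀ p', H p + ⟪q, p' - p⟫ ≤ H p'}

/-- `Γ_k`: subgradients of `H` at points of the level set `H⁻¹(k)`. -/
def GammaSet (H : Euc n → ℝ) (k : ℝ) : Set (Euc n) :=
  {q | ∃ p, H p = k ∧ q ∈ subdiff H p}

/-- `W_k`: subgradients of `H` at points of the sublevel set `H⁻¹([0,k])`. -/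
def WSet (H : Euc n → ℝ) (k : ℝ) : Set (Euc n) :=
  {q | ∃ p, 0 ≤ H p ∧ H p ≤ k ∧ q ∈ subdiff H p}

/-- `u ∈ Lip_loc(U)`: `u` is locally Lipschitz on `U`. -/
def LocLipOn (u : Euc n → ℝ) (U : Set (Euc n)) : Prop :=
  ∀ x ∈ U, ∃ K : NNReal, ∃ s ∈ nhdsWithin x U, LipschitzOnWith K u s

/-- `ess sup_V H(Dv)`, defined to be `+∞` if `v` is not locally Lipschitz in `V`.
Here `Dv` is the a.e.-defined gradient (Rademacher). -/
def essSupH (H : Euc n → ℝ) (V : Set (Euc n)) (v : Euc n → ℝ) : EReal :=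
  haveI := Classical.propDecidable (LocLipOn v V)
  if LocLipOn v V then
    essSup (fun x => ((H (gradient v x) : ℝ) : EReal)) (volume.restrict V)
  else ⊤

/-- `u` is absolutely subminimizing for `H` in `U`. -/
def AbsSubmin (H : Euc n → ℝ) (U : Set (Euc n)) (u : Euc n → ℝ) : Prop :=
  LocLipOn u U ∧
  ∀ V : Set (Euc n), IsOpen V → IsCompact (closure V) → closure V ⊆ U →
    ∀ v : Euc n → ℝ, LocLipOn v V → ContinuousOn v (closure V) →
      EqOn v u (frontier V) → (∀ x ∈ V, v x ≤ u x) →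
        essSupH H V u ≤ essSupH H V v

/-- `u` is absolutely superminimizing for `H` in `U`. -/
def AbsSupermin (H : Euc n → ℝ) (U : Set (Euc n)) (u : Euc n → ℝ) : Prop :=
  LocLipOn u U ∧
  ∀ V : Set (Euc n), IsOpen V → IsCompact (closure V) → closure V ⊆ U →
    ∀ v : Euc n → ℝ, LocLipOn v V → ContinuousOn v (closure V) →
      EqOn v u (frontier V) → (∀ x ∈ V, u x ≤ v x) →
        essSupH H V u ≤ essSupH H V v

/-- `u` satisfies comparisons with cones from above in `U`. -/
def CmpConesAbove (H : Euc n → ℝ) (U : Set (Euc n)) (u : Euc n → ℝ) : Prop :=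
  ∀ k : ℝ, 0 ≤ k → ∀ V : Set (Euc n), IsOpen V → IsCompact (closure V) → closure V ⊆ U →
    ∀ x₀, x₀ ∉ V →
      sSup ((fun x => u x - coneFn H k (x - x₀)) '' closure V) =
      sSup ((fun x => u x - coneFn H k (x - x₀)) '' frontier V)

/-- `u` satisfies the convexity criterion in `U`. -/
def ConvexityCriterion (H : Euc n → ℝ) (U : Set (Euc n)) (u : Euc n → ℝ) : Prop :=
  ∀ V : Set (Euc n), IsOpen V → IsCompact (closure V) → closure V ⊆ U →
    ∃ δ > (0:ℝ), ∀ x ∈ V, ConvexOn ℝ (Icc 0 δ) (fun t => TupOn H U u t x)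

/-- `u` satisfies the pointwise convexity criterion in `U`. -/
def PtwiseCC (H : Euc n → ℝ) (U : Set (Euc n)) (u : Euc n → ℝ) : Prop :=
  UpperSemicontinuousOn (Splus H U u) U ∧
  ∀ x ∈ U, ∃ δ > (0:ℝ), ConvexOn ℝ (Icc 0 δ) (fun t => TupOn H U u t x)

end

open Topology

section Growth

variable {E : Type*} [NormedAddCommGroup E] [NormedSpace ℝ E] [FiniteDimensional ℝ E] {H : E → ℝ}

/-- By convexity and `H 0 = 0`, `H (s • p) ≤ s * H p` for `s ∈ [0, 1]`, so the positive minimum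
of `H` on a sphere enclosing `H⁻¹(0)` propagates outwards. -/
theorem exists_mul_norm_sub_le (hHconv : ConvexOn ℝ univ H) (hH0 : H 0 = 0)
    (hHnn : ∀ p, 0 ≤ H p) (hHzb : Bornology.IsBounded {p | H p = 0}) :
    ∃ c > (0 : ℝ), ∃ C, ∀ p, c * ‖p‖ - C ≤ H p := by
  obtain ⟨R, hR⟩ := hHzb.subset_closedBall 0
  set ρ : ℝ := max R 0 + 1
  have hρ : 0 < ρ := by positivity
  have hpos : ∀ p ∈ sphere (0 : E) ρ, 0 < H p := by
    intro p hp
    refine (hHnn p).lt_of_ne fun h => ?_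
    have := mem_closedBall_zero_iff.1 (hR h.symm)
    rw [mem_sphere_zero_iff_norm.1 hp] at this
    linarith [le_max_left R 0]
  obtain ⟨μ, hμ, hμH⟩ := (isCompact_sphere (0 : E) ρ).exists_forall_le'
    ((hHconv.continuousOn isOpen_univ).mono (subset_univ _)) hpos
  refine ⟨μ / ρ, by positivity, μ, fun p => ?_⟩
  rcases le_or_gt ‖p‖ ρ with hp | hp
  · have : μ / ρ * ‖p‖ ≤ μ := by
      rw [div_mul_eq_mul_div, div_le_iff₀ hρ]
      exact mul_le_mul_of_nonneg_left hp hμ.le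
    linarith [hHnn p]
  · have hpn : 0 < ‖p‖ := hρ.trans hp
    set s := ρ / ‖p‖
    have hs : s < 1 := (div_lt_one hpn).2 hp
    have hsp : s • p ∈ sphere (0 : E) ρ := by
      rw [mem_sphere_zero_iff_norm, norm_smul, Real.norm_of_nonneg (by positivity)]
      exact div_mul_cancel₀ ρ hpn.ne'
    have hconv : H (s • p) ≤ s * H p := by
      simpa [hH0] using hHconv.2 (mem_univ p) (mem_univ 0) (show 0 ≤ s by positivity)
        (show 0 ≤ 1 - s by linarith) (by ring)
    have : μ ≤ ρ / ‖p‖ * H p := (hμH _ hsp).trans hconv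
    rw [div_mul_eq_mul_div, le_div_iff₀ hpn] at this
    have : μ * ‖p‖ / ρ ≤ H p := by rw [div_le_iff₀ hρ]; linarith
    rw [div_mul_eq_mul_div]
    linarith

end Growth

theorem ConvexOn.monotoneOn_slope_zero {f : ℝ → ℝ} {δ : ℝ} (hf : ConvexOn ℝ (Icc 0 δ) f) :
    MonotoneOn (fun t => (f t - f 0) / t) (Ioc 0 δ) := by
  intro s hs t ht hst
  simpa using hf.secant_mono ⟨le_rfl, hs.1.le.trans hs.2⟩ ⟨hs.1.le, hs.2⟩ ⟨ht.1.le, ht.2⟩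
    hs.1.ne' ht.1.ne' hst

theorem upperSemicontinuousWithinAt_of_le_of_exists_lt {α ι β : Type*} [TopologicalSpace α]
    [Preorder β] {f : α → β} {g : ι → α → β} {I : Set ι} {s : Set α} {x : α}
    (hg : ∀ i ∈ I, UpperSemicontinuousWithinAt (g i) s x)
    (hle : ∀ i ∈ I, ∀ᶠ y in 𝓝[s] x, f y ≤ g i y) (hlt : ∀ b, f x < b → ∃ i ∈ I, g i x < b) :
    UpperSemicontinuousWithinAt f s x := by
  intro b hb
  obtain ⟨i, hi, hib⟩ := hlt b hb
  filter_upwards [hg i hi b hib, hle i hi] with y hgy hfy using hfy.trans_lt hgy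

section Lagrangian

variable {n : ℕ} (H : Euc n → ℝ)

theorem le_lag (p q : Euc n) : ((⟪p, q⟫ - H p : ℝ) : EReal) ≤ Lag H q :=
  le_iSup (fun p : Euc n => ((⟪p, q⟫ - H p : ℝ) : EReal)) p

theorem lag_ne_bot (q : Euc n) : Lag H q ≠ ⊥ :=
  ne_bot_of_le_ne_bot (EReal.coe_ne_bot _) (le_lag H 0 q)

variable {H}

theorem lag_nonneg (hH0 : H 0 = 0) (q : Euc n) : 0 ≤ Lag H q := by
  simpa [hH0] using le_lag H 0 q

theorem lag_zero (hH0 : H 0 = 0) (hHnn : ∀ p, 0 ≤ H p) : Lag H 0 = 0 :=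
  le_antisymm (iSup_le fun p => by simpa using EReal.coe_le_coe_iff.2 (neg_nonpos.2 (hHnn p)))
    (lag_nonneg hH0 0)

theorem lag_le_of_norm_le {c C : ℝ} (hlower : ∀ p, c * ‖p‖ - C ≤ H p) {q : Euc n}
    (hq : ‖q‖ ≤ c) : Lag H q ≤ C := by
  refine iSup_le fun p => EReal.coe_le_coe_iff.2 ?_
  nlinarith [real_inner_le_norm p q, hlower p, norm_nonneg p]

/-- The test covector is `p = (R / ‖q‖) • q`, which has norm at most `R`. -/
theorem mul_norm_sub_le_lag {R C : ℝ} (hR : 0 ≤ R) (hH : ∀ p : Euc n, ‖p‖ ≤ R → H p ≤ C)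
    (q : Euc n) : ((R * ‖q‖ - C : ℝ) : EReal) ≤ Lag H q := by
  set p : Euc n := (R / ‖q‖) • q
  have hpq : ⟪p, q⟫ = R * ‖q‖ := by
    rcases eq_or_ne q 0 with rfl | hq
    · simp [p]
    · rw [real_inner_smul_left, real_inner_self_eq_norm_sq]
      field_simp [norm_ne_zero_iff.2 hq]
  have hp : ‖p‖ ≤ R := by
    rw [norm_smul, Real.norm_of_nonneg (by positivity)]
    rcases eq_or_ne ‖q‖ 0 with hq | hq
    · simpa [hq] using hR
    · rw [div_mul_cancel₀ _ hq]
  exact (EReal.coe_le_coe_iff.2 (by rw [hpq]; linarith [hH p hp])).trans (le_lag H p q)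

/-- Superlinearity of `Lag H`: for small `t`, moving a distance more than `r` in time `t`
costs more than `D`. -/
theorem exists_forall_div_le_lag (hH : Continuous H) (D : ℝ) {r : ℝ} (hr : 0 < r) :
    ∃ τ > (0 : ℝ), ∀ t ∈ Ioc 0 τ, ∀ q : Euc n, r < t * ‖q‖ → ((D / t : ℝ) : EReal) ≤ Lag H q := by
  set R := (max D 0 + 1) / r
  obtain ⟨C, hC⟩ := (isCompact_closedBall (0 : Euc n) R).bddAbove_image hH.continuousOn
  set C' := max C 0
  have hHC : ∀ p : Euc n, ‖p‖ ≤ R → H p ≤ C' := fun p hp =>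
    (hC ⟨p, mem_closedBall_zero_iff.2 hp, rfl⟩).trans (le_max_left C 0)
  refine ⟨(C' + 1)⁻¹, by positivity, fun t ht q hq => ?_⟩
  refine le_trans (EReal.coe_le_coe_iff.2 ?_) (mul_norm_sub_le_lag (by positivity) hHC q)
  have htC : t * C' ≤ 1 := by
    have h1 : t * C' ≤ (C' + 1)⁻¹ * C' := mul_le_mul_of_nonneg_right ht.2 (le_max_right C 0)
    have h2 : (C' + 1)⁻¹ * C' ≤ 1 := by rw [inv_mul_le_iff₀ (by positivity)]; linarith
    linarith
  have hRr : R * r = max D 0 + 1 := div_mul_cancel₀ _ hr.ne'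
  rw [div_le_iff₀ ht.1]
  nlinarith [le_max_left D 0, mul_lt_mul_of_pos_left hq (show 0 < R by positivity)]

end Lagrangian

section HopfLax

variable {n : ℕ} {H : Euc n → ℝ} {U : Set (Euc n)} {u : Euc n → ℝ} {t δ M m b l ε r c C : ℝ}
  {x x' y x₀ : Euc n}

theorem tupOn_zero : TupOn H U u 0 x = u x := if_pos rfl

theorem exists_lag_eq_of_mem {a : ℝ} (ht : 0 < t)
    (ha : a ∈ {r : ℝ | ∃ y ∈ U,
      (r : EReal) = (u y : EReal) - (t : EReal) * Lag H (t⁻¹ • (y - x))}) :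
    ∃ y ∈ U, ∃ l : ℝ, Lag H (t⁻¹ • (y - x)) = l ∧ a = u y - t * l := by
  obtain ⟨y, hy, hr⟩ := ha
  have hne_top : Lag H (t⁻¹ • (y - x)) ≠ ⊤ := by
    intro h
    rw [h, EReal.coe_mul_top_of_pos (by exact_mod_cast ht), EReal.sub_top] at hr
    exact EReal.coe_ne_bot a hr
  have hl := EReal.coe_toReal hne_top (lag_ne_bot H _)
  refine ⟨y, hy, _, hl.symm, ?_⟩
  rw [← hl] at hr
  exact_mod_cast hr

theorem tupOn_le_of_forall_sub_mul_le (hH0 : H 0 = 0) (hHnn : ∀ p, 0 ≤ H p) (ht : 0 < t)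
    (hx : x ∈ U)
    (h : ∀ y ∈ U, ∀ l : ℝ, Lag H (t⁻¹ • (y - x)) = l → u y - t * l ≤ b) :
    TupOn H U u t x ≤ b := by
  rw [TupOn, if_neg ht.ne']
  refine csSup_le ⟨u x, x, hx, by simp [lag_zero hH0 hHnn]⟩ fun r hr => ?_
  obtain ⟨y, hy, l, hl, rfl⟩ := exists_lag_eq_of_mem ht hr
  exact h y hy l hl

theorem sub_mul_le_tupOn (hH0 : H 0 = 0) (hM : ∀ y ∈ U, u y ≤ M) (ht : 0 < t) (hy : y ∈ U)
    (hl : Lag H (t⁻¹ • (y - x)) ≤ l) : u y - t * l ≤ TupOn H U u t x := by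
  have hne_top : Lag H (t⁻¹ • (y - x)) ≠ ⊤ := ne_top_of_le_ne_top (EReal.coe_ne_top l) hl
  have hl' := (EReal.coe_toReal hne_top (lag_ne_bot H _)).symm
  have hl'l := EReal.coe_le_coe_iff.1 (hl' ▸ hl)
  have hbdd : BddAbove {r : ℝ | ∃ y ∈ U,
      (r : EReal) = (u y : EReal) - (t : EReal) * Lag H (t⁻¹ • (y - x))} := by
    refine ⟨M, fun r hr => ?_⟩
    obtain ⟨z, hz, k, hk, rfl⟩ := exists_lag_eq_of_mem ht hr
    have : 0 ≤ k := EReal.coe_nonneg.1 (hk ▸ lag_nonneg hH0 _)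
    nlinarith [hM z hz]
  rw [TupOn, if_neg ht.ne']
  calc u y - t * l ≤ u y - t * (Lag H (t⁻¹ • (y - x))).toReal := by nlinarith
    _ ≤ _ := le_csSup hbdd ⟨y, hy, by rw [hl']; norm_cast⟩

theorem le_tupOn (hH0 : H 0 = 0) (hHnn : ∀ p, 0 ≤ H p) (hM : ∀ y ∈ U, u y ≤ M) (ht : 0 ≤ t)
    (hx : x ∈ U) : u x ≤ TupOn H U u t x := by
  rcases ht.eq_or_lt with rfl | ht
  · exact tupOn_zero.ge
  · simpa using sub_mul_le_tupOn (l := 0) hH0 hM ht hx (by simp [lag_zero hH0 hHnn])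

theorem tupOn_le_of_forall_le (hH0 : H 0 = 0) (hHnn : ∀ p, 0 ≤ H p) (hM : ∀ y ∈ U, u y ≤ M)
    (ht : 0 ≤ t) (hx : x ∈ U) : TupOn H U u t x ≤ M := by
  rcases ht.eq_or_lt with rfl | ht
  · exact tupOn_zero.trans_le (hM x hx)
  · refine tupOn_le_of_forall_sub_mul_le hH0 hHnn ht hx fun y hy l hl => ?_
    have : 0 ≤ l := EReal.coe_nonneg.1 (hl ▸ lag_nonneg hH0 _)
    nlinarith [hM y hy]

theorem monotoneOn_slope_tupOn (hconv : ConvexOn ℝ (Icc 0 δ) (fun t => TupOn H U u t x)) :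
    MonotoneOn (fun t => (TupOn H U u t x - u x) / t) (Ioc 0 δ) := by
  simpa only [tupOn_zero] using hconv.monotoneOn_slope_zero

theorem bddBelow_slope_tupOn (hH0 : H 0 = 0) (hHnn : ∀ p, 0 ≤ H p) (hM : ∀ y ∈ U, u y ≤ M)
    (hx : x ∈ U) : BddBelow ((fun t => (TupOn H U u t x - u x) / t) '' Ioo 0 δ) := by
  refine ⟨0, ?_⟩
  rintro _ ⟨t, ht, rfl⟩
  exact div_nonneg (sub_nonneg.2 (le_tupOn hH0 hHnn hM ht.1.le hx)) ht.1.le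

theorem splus_eq_sInf (hH0 : H 0 = 0) (hHnn : ∀ p, 0 ≤ H p) (hM : ∀ y ∈ U, u y ≤ M)
    (hx : x ∈ U) (hδ : 0 < δ) (hconv : ConvexOn ℝ (Icc 0 δ) (fun t => TupOn H U u t x)) :
    Splus H U u x = sInf ((fun t => (TupOn H U u t x - u x) / t) '' Ioo 0 δ) :=
  (MonotoneOn.tendsto_nhdsWithin_Ioo_right (nonempty_Ioo.2 hδ)
    ((monotoneOn_slope_tupOn hconv).mono Ioo_subset_Ioc_self)
    (bddBelow_slope_tupOn hH0 hHnn hM hx)).limsup_eq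

/-- Near competitors `y` for `x` are translated to competitors for `x'` with the same
Lagrangian cost; far competitors pay more than the oscillation `M - m` and are useless. -/
theorem tupOn_le_tupOn_add (hH0 : H 0 = 0) (hHnn : ∀ p, 0 ≤ H p) (hM : ∀ y ∈ U, u y ≤ M)
    (hm : ∀ y ∈ U, m ≤ u y) (ht : 0 < t) (hx : x ∈ U) (hx' : x' ∈ U)
    (hball : closedBall x' r ⊆ U)
    (hnear : ∀ y ∈ U, ‖y - x‖ ≤ r → u y ≤ u (y + (x' - x)) + ε)
    (hfar : ∀ q, r < t * ‖q‖ → (((M - m) / t : ℝ) : EReal) ≤ Lag H q) (hε : 0 ≤ ε) :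
    TupOn H U u t x ≤ TupOn H U u t x' + ε := by
  refine tupOn_le_of_forall_sub_mul_le hH0 hHnn ht hx fun y hy l hl => ?_
  by_cases hyx : ‖y - x‖ ≤ r
  · have hy' : y + (x' - x) ∈ U := hball (by
      rwa [mem_closedBall, dist_eq_norm, show y + (x' - x) - x' = y - x by abel])
    have hl' : Lag H (t⁻¹ • (y + (x' - x) - x')) ≤ l := by
      rw [show y + (x' - x) - x' = y - x by abel, hl]
    linarith [hnear y hy hyx, sub_mul_le_tupOn hH0 hM ht hy' hl']
  · have hq : r < t * ‖t⁻¹ • (y - x)‖ := by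
      rwa [norm_smul, Real.norm_of_nonneg (inv_pos.2 ht).le, mul_inv_cancel_left₀ ht.ne',
        ← not_le]
    have hlM : (M - m) / t ≤ l := EReal.coe_le_coe_iff.1 (hl ▸ hfar _ hq)
    rw [div_le_iff₀ ht] at hlM
    linarith [hM y hy, hm x' hx', le_tupOn hH0 hHnn hM ht.le hx' (t := t)]

theorem exists_upperSemicontinuousWithinAt_tupOn (hH : Continuous H) (hH0 : H 0 = 0)
    (hHnn : ∀ p, 0 ≤ H p) (hU : IsOpen U) (huc : ContinuousOn u U) (hM : ∀ y ∈ U, u y ≤ M)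
    (hm : ∀ y ∈ U, m ≤ u y) (hx₀ : x₀ ∈ U) :
    ∃ τ > 0, ∀ t ∈ Ioc 0 τ, UpperSemicontinuousWithinAt (fun x => TupOn H U u t x) U x₀ := by
  obtain ⟨ρ, hρ, hρU⟩ := Metric.isOpen_iff.1 hU x₀ hx₀
  obtain ⟨r, hr, hrρ⟩ : ∃ r > 0, 2 * r < ρ := ⟨ρ / 3, by positivity, by linarith⟩
  have hK : closedBall x₀ (2 * r) ⊆ U := (closedBall_subset_ball (by linarith)).trans hρU
  obtain ⟨τ, hτ, hlag⟩ := exists_forall_div_le_lag hH (M - m) hr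
  refine ⟨τ, hτ, fun t ht b (hb : TupOn H U u t x₀ < b) => ?_⟩
  obtain ⟨ε, hε, hεb⟩ : ∃ ε > 0, TupOn H U u t x₀ + ε < b :=
    ⟨(b - TupOn H U u t x₀) / 2, by linarith, by linarith⟩
  obtain ⟨η, hη, hclose⟩ := Metric.uniformContinuousOn_iff.1
    ((isCompact_closedBall x₀ (2 * r)).uniformContinuousOn_of_continuous (huc.mono hK)) ε hε
  have hnhds : ball x₀ (min r η) ∈ 𝓝[U] x₀ :=
    mem_nhdsWithin_of_mem_nhds (ball_mem_nhds _ (lt_min hr hη))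
  filter_upwards [hnhds, self_mem_nhdsWithin] with x hxb hxU
  have hxr : ‖x - x₀‖ < r := mem_ball_iff_norm.1 (ball_subset_ball (min_le_left _ _) hxb)
  have hxη : ‖x - x₀‖ < η := mem_ball_iff_norm.1 (ball_subset_ball (min_le_right _ _) hxb)
  have hnear : ∀ y ∈ U, ‖y - x‖ ≤ r → u y ≤ u (y + (x₀ - x)) + ε := by
    intro y _ hy
    have hyK : y ∈ closedBall x₀ (2 * r) := by
      rw [mem_closedBall_iff_norm]
      calc ‖y - x₀‖ = ‖(y - x) + (x - x₀)‖ := by rw [sub_add_sub_cancel]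
        _ ≤ ‖y - x‖ + ‖x - x₀‖ := norm_add_le _ _
        _ ≤ 2 * r := by linarith
    have hy'K : y + (x₀ - x) ∈ closedBall x₀ (2 * r) := by
      rw [mem_closedBall_iff_norm, show y + (x₀ - x) - x₀ = y - x by abel]
      linarith
    have := hclose y hyK _ hy'K (by
      rwa [dist_eq_norm, show y - (y + (x₀ - x)) = x - x₀ by abel])
    linarith [abs_lt.1 (Real.dist_eq _ _ ▸ this)]
  have := tupOn_le_tupOn_add hH0 hHnn hM hm ht.1 hxU hx₀
    ((closedBall_subset_closedBall (by linarith)).trans hK) hnear (hlag t ht) hε.le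
  linarith

theorem exists_ball_convexOn_tupOn (hU : IsOpen U) (hcc : ConvexityCriterion H U u)
    (hx₀ : x₀ ∈ U) : ∃ ρ > 0, ball x₀ ρ ⊆ U ∧
      ∃ δ > 0, ∀ x ∈ ball x₀ ρ, ConvexOn ℝ (Icc 0 δ) (fun t => TupOn H U u t x) := by
  obtain ⟨ε, hε, hεU⟩ := Metric.isOpen_iff.1 hU x₀ hx₀
  have hcl : closure (ball x₀ (ε / 2)) ⊆ U :=
    closure_ball_subset_closedBall.trans ((closedBall_subset_ball (half_lt_self hε)).trans hεU)
  obtain ⟨δ, hδ, hconv⟩ := hcc _ isOpen_ball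
    ((isCompact_closedBall x₀ _).of_isClosed_subset isClosed_closure closure_ball_subset_closedBall)
    hcl
  exact ⟨ε / 2, half_pos hε, subset_closure.trans hcl, δ, hδ, hconv⟩

theorem upperSemicontinuousOn_splus (hH : Continuous H) (hH0 : H 0 = 0) (hHnn : ∀ p, 0 ≤ H p)
    (hU : IsOpen U) (huc : ContinuousOn u U) (hM : ∀ y ∈ U, u y ≤ M) (hm : ∀ y ∈ U, m ≤ u y)
    (hcc : ConvexityCriterion H U u) : UpperSemicontinuousOn (Splus H U u) U := by
  intro x₀ hx₀
  obtain ⟨ρ, hρ, hρU, δ, hδ, hconv⟩ := exists_ball_convexOn_tupOn hU hcc hx₀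
  obtain ⟨τ, hτ, husc⟩ := exists_upperSemicontinuousWithinAt_tupOn hH hH0 hHnn hU huc hM hm hx₀
  have hδτ : 0 < min δ τ := lt_min hδ hτ
  have hform : ∀ x ∈ ball x₀ ρ, Splus H U u x =
      sInf ((fun t => (TupOn H U u t x - u x) / t) '' Ioo 0 (min δ τ)) := fun x hx =>
    splus_eq_sInf hH0 hHnn hM (hρU hx) hδτ
      ((hconv x hx).subset (Icc_subset_Icc_right (min_le_left _ _)) (convex_Icc _ _))
  refine upperSemicontinuousWithinAt_of_le_of_exists_lt (I := Ioo 0 (min δ τ))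
    (g := fun t x => (TupOn H U u t x - u x) / t) (fun t ht => ?_) (fun t ht => ?_)
    (fun b hb => ?_)
  · have hsub := (husc t ⟨ht.1, ht.2.le.trans (min_le_right _ _)⟩).add
      (huc x₀ hx₀).neg.upperSemicontinuousWithinAt
    simpa only [Function.comp_def, id, Pi.neg_apply, sub_eq_add_neg] using
      (continuous_id.div_const t).continuousAt.comp_upperSemicontinuousWithinAt hsub
        (monotone_div_right_of_nonneg ht.1.le)
  · filter_upwards [mem_nhdsWithin_of_mem_nhds (ball_mem_nhds x₀ hρ)] with x hx
    rw [hform x hx]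
    exact csInf_le (bddBelow_slope_tupOn hH0 hHnn hM (hρU hx)) (mem_image_of_mem _ ht)
  · rw [hform x₀ (mem_ball_self hρ)] at hb
    obtain ⟨_, ⟨t, ht, rfl⟩, htb⟩ := exists_lt_of_csInf_lt ((nonempty_Ioo.2 hδτ).image _) hb
    exact ⟨t, ht, htb⟩

/-- With `t = ‖y - x‖ / c`, the competitor `y` costs at most `t * C`, while convexity bounds
`T^t u x - u x` by `t * (M - m) / δ`. -/
theorem sub_le_mul_norm_of_convexOn_tupOn (hH0 : H 0 = 0) (hHnn : ∀ p, 0 ≤ H p)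
    (hM : ∀ y ∈ U, u y ≤ M) (hm : ∀ y ∈ U, m ≤ u y) (hlower : ∀ p, c * ‖p‖ - C ≤ H p)
    (hc : 0 < c) (hδ : 0 < δ) (hx : x ∈ U) (hy : y ∈ U)
    (hconv : ConvexOn ℝ (Icc 0 δ) (fun t => TupOn H U u t x)) (hxy : ‖y - x‖ ≤ c * δ) :
    u y - u x ≤ ((M - m) / δ + C) / c * ‖y - x‖ := by
  rcases eq_or_ne y x with rfl | hne
  · simp
  set t := ‖y - x‖ / c
  have ht : 0 < t := div_pos (norm_pos_iff.2 (sub_ne_zero.2 hne)) hc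
  have htδ : t ≤ δ := (div_le_iff₀' hc).2 hxy
  have hcost : Lag H (t⁻¹ • (y - x)) ≤ C := lag_le_of_norm_le hlower (by
    rw [norm_smul, Real.norm_of_nonneg (inv_pos.2 ht).le, inv_div,
      div_mul_cancel₀ _ (norm_pos_iff.2 (sub_ne_zero.2 hne)).ne'])
  have hTδ : TupOn H U u δ x - u x ≤ M - m := by
    linarith [tupOn_le_of_forall_le hH0 hHnn hM hδ.le hx, hm x hx]
  have hslope : (TupOn H U u t x - u x) / t ≤ (M - m) / δ :=
    (monotoneOn_slope_tupOn hconv ⟨ht, htδ⟩ ⟨hδ, le_rfl⟩ htδ).trans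
      (div_le_div_of_nonneg_right hTδ hδ.le)
  rw [div_le_iff₀ ht] at hslope
  have hkey : ((M - m) / δ + C) / c * ‖y - x‖ = t * ((M - m) / δ + C) := by
    simp only [t]; ring
  rw [hkey]
  nlinarith [sub_mul_le_tupOn hH0 hM ht hy hcost]

theorem locLipOn_of_convexityCriterion (hH0 : H 0 = 0) (hHnn : ∀ p, 0 ≤ H p) (hU : IsOpen U)
    (hM : ∀ y ∈ U, u y ≤ M) (hm : ∀ y ∈ U, m ≤ u y) (hlower : ∀ p, c * ‖p‖ - C ≤ H p)
    (hc : 0 < c) (hcc : ConvexityCriterion H U u) : LocLipOn u U := by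
  intro x₀ hx₀
  obtain ⟨ρ, hρ, hρU, δ, hδ, hconv⟩ := exists_ball_convexOn_tupOn hU hcc hx₀
  set k := ((M - m) / δ + C) / c
  refine ⟨k.toNNReal, ball x₀ (min ρ (c * δ / 2)),
    mem_nhdsWithin_of_mem_nhds (ball_mem_nhds _ (by positivity)),
    LipschitzOnWith.of_dist_le_mul fun x hx y hy => ?_⟩
  have hxρ : x ∈ ball x₀ ρ := ball_subset_ball (min_le_left _ _) hx
  have hyρ : y ∈ ball x₀ ρ := ball_subset_ball (min_le_left _ _) hy
  have hxy : ‖y - x‖ ≤ c * δ := by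
    have := dist_triangle_right y x x₀
    rw [← dist_eq_norm]
    linarith [mem_ball.1 (ball_subset_ball (min_le_right _ _) hx),
      mem_ball.1 (ball_subset_ball (min_le_right _ _) hy)]
  have hyx := sub_le_mul_norm_of_convexOn_tupOn hH0 hHnn hM hm hlower hc hδ (hρU hxρ) (hρU hyρ)
    (hconv x hxρ) hxy
  have hxy' := sub_le_mul_norm_of_convexOn_tupOn hH0 hHnn hM hm hlower hc hδ (hρU hyρ)
    (hρU hxρ) (hconv y hyρ) (norm_sub_rev x y ▸ hxy)
  rw [norm_sub_rev] at hyx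
  calc dist (u x) (u y) ≤ k * ‖x - y‖ := by
        rw [Real.dist_eq, abs_sub_le_iff]; constructor <;> linarith
    _ ≤ k.toNNReal * dist x y := by
        rw [dist_eq_norm]; gcongr; exact Real.le_coe_toNNReal k

end HopfLax

theorem convexity_criterion_consequences_general {n : ℕ} (H : Euc n → ℝ)
    (hHconv : ConvexOn ℝ Set.univ H) (hH0 : H 0 = 0) (hHnonneg : ∀ p, 0 ≤ H p)
    (hHzb : Bornology.IsBounded {p : Euc n | H p = 0})
    (U : Set (Euc n)) (hU : IsOpen U) (u : Euc n → ℝ)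
    (huc : ContinuousOn u U) (hub : Bornology.IsBounded (u '' U))
    (hcc : ConvexityCriterion H U u) :
    (∀ V : Set (Euc n), IsOpen V → IsCompact (closure V) → closure V ⊆ U →
      ∀ δ : ℝ, 0 < δ → (∀ x ∈ V, ConvexOn ℝ (Icc 0 δ) (fun t => TupOn H U u t x)) →
        (∀ x ∈ V, MonotoneOn (fun t => (TupOn H U u t x - u x) / t) (Ioc 0 δ)) ∧
        (∀ x ∈ V, Splus H U u x =
          sInf ((fun t => (TupOn H U u t x - u x) / t) '' Ioo 0 δ))) ∧
    UpperSemicontinuousOn (Splus H U u) U ∧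
    LocLipOn u U := by
  obtain ⟨M, hM⟩ := hub.bddAbove
  obtain ⟨m, hm⟩ := hub.bddBelow
  replace hM : ∀ y ∈ U, u y ≤ M := fun y hy => hM (mem_image_of_mem u hy)
  replace hm : ∀ y ∈ U, m ≤ u y := fun y hy => hm (mem_image_of_mem u hy)
  obtain ⟨c, hc, C, hlower⟩ := exists_mul_norm_sub_le hHconv hH0 hHnonneg hHzb
  have hHcont : Continuous H := continuousOn_univ.1 (hHconv.continuousOn isOpen_univ)
  refine ⟨fun V _ _ hVU δ hδ hconv => ⟨fun x hx => monotoneOn_slope_tupOn (hconv x hx),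
    fun x hx => splus_eq_sInf hH0 hHnonneg hM (hVU (subset_closure hx)) hδ (hconv x hx)⟩,
    upperSemicontinuousOn_splus hHcont hH0 hHnonneg hU huc hM hm hcc,
    locLipOn_of_convexityCriterion hH0 hHnonneg hU hM hm hlower hc hcc⟩

/-- Consequences of the convexity criterion: monotone difference quotients, the formula for
`S⁺u`, upper semicontinuity of `S⁺u`, and local Lipschitz continuity. -/
theorem convexity_criterion_consequences {n : ℕ} (hn : 1 ≤ n) (H : Euc n → ℝ)
    (hHconv : ConvexOn ℝ Set.univ H) (hH0 : H 0 = 0) (hHnonneg : ∀ p, 0 ≤ H p)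
    (hHzb : Bornology.IsBounded {p : Euc n | H p = 0})
    (hHzi : interior {p : Euc n | H p = 0} = ∅)
    (U : Set (Euc n)) (hU : IsOpen U) (u : Euc n → ℝ)
    (huc : ContinuousOn u U) (hub : Bornology.IsBounded (u '' U))
    (hcc : ConvexityCriterion H U u) :
    (∀ V : Set (Euc n), IsOpen V → IsCompact (closure V) → closure V ⊆ U →
      ∀ δ : ℝ, 0 < δ → (∀ x ∈ V, ConvexOn ℝ (Icc 0 δ) (fun t => TupOn H U u t x)) →
        (∀ x ∈ V, MonotoneOn (fun t => (TupOn H U u t x - u x) / t) (Ioc 0 δ)) ∧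
        (∀ x ∈ V, Splus H U u x =
          sInf ((fun t => (TupOn H U u t x - u x) / t) '' Ioo 0 δ))) ∧
    UpperSemicontinuousOn (Splus H U u) U ∧
    LocLipOn u U :=
  convexity_criterion_consequences_general H hHconv hH0 hHnonneg hHzb U hU u huc hub hcc
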